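/- Let q be a prime, let n ≥ 1, and let a, v ∈ (ℤ/qℤ)^n. Then |Pr[M_n · a = v] − q^{−n}| ≤ q^{−n} · Σ_{ℓ ∈ (ℤ/qℤ)^n, ℓ ≠ 0} ∏_{1 ≤ i < j ≤ n} |cos(2π(ℓ_i a_j + ℓ_j a_i)/q)|, where for x ∈ ℤ/qℤ the quantity cos(2πx/q) is evaluated at any integer representative of x. -/

import Mathlib

/-- The random symmetric ±1 matrix: the upper-triangular entries
(including diagonal) are determined by independent fair coin flips
`σ i j` for `i ≤ j`, and the matrix is symmetric. -/
def signMatrix (n : ℕ) (σ : Fin n → Fin n → Bool) : Matrix (Fin n) (Fin n) ℤ :=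
  fun i j => if σ (min i j) (max i j) then 1 else -1

/-- Probability, under the uniform distribution on symmetric ±1 matrices,
that the matrix satisfies `P`. -/
noncomputable def probSym (n : ℕ) (P : Matrix (Fin n) (Fin n) ℤ → Prop) : ℝ :=
  (Nat.card {σ : Fin n → Fin n → Bool // P (signMatrix n σ)} : ℝ) /
    Fintype.card (Fin n → Fin n → Bool)

/-!
With `ψ x = exp (2πi x / q)`, orthogonality of the characters `w ↦ ψ (ℓ ⬝ᵥ w)` of `(ℤ/qℤ)ⁿ` gives
`qⁿ · #{σ | M_σ a = v} = ∑_ℓ ψ (-ℓ ⬝ᵥ v) ∑_σ ψ (ℓ ⬝ᵥ M_σ a)`, whose `ℓ = 0` term is the number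
`2^(n²)` of coin vectors `σ`. For each `ℓ`, `ℓ ⬝ᵥ M_σ a` is a sum `∑_{i ≤ j} ±c_{ij}` with one
independent sign per coin and `c_{ij} = ℓ_i a_j + ℓ_j a_i` for `i < j`, so the sum over `σ` factors
as `∏ (ψ c + ψ (-c)) = ∏ 2 cos (2π c / q)`; the factors with `i ≥ j` are bounded by `2`.
-/

open Finset Matrix

namespace AddChar

section Monoid
variable {A M : Type*} [AddCommMonoid A] [CommMonoid M]

lemma map_sum_eq_prod (ψ : AddChar A M) {ι : Type*} (s : Finset ι) (f : ι → A) :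
    ψ (∑ i ∈ s, f i) = ∏ i ∈ s, ψ (f i) := by
  classical
  induction s using Finset.induction_on with
  | empty => simp
  | insert i s hi ih => rw [sum_insert hi, prod_insert hi, map_add_eq_mul, ih]

end Monoid

lemma sum_pi_bool_map_sum_ite {A M ι : Type*} [AddCommMonoid A] [CommSemiring M]
    [Fintype ι] [DecidableEq ι] (ψ : AddChar A M) (c d : ι → A) :
    ∑ σ : ι → Bool, ψ (∑ i, if σ i then c i else d i) = ∏ i, (ψ (c i) + ψ (d i)) := by
  simp_rw [map_sum_eq_prod]
  simpa [Fintype.sum_bool] using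
    (Fintype.prod_sum fun i (b : Bool) => ψ (if b then c i else d i)).symm

lemma sum_dotProduct_eq_ite {R R' ι : Type*} [CommRing R] [Fintype R] [DecidableEq R]
    [CommRing R'] [IsDomain R'] [Fintype ι] [DecidableEq ι] {ψ : AddChar R R'}
    (hψ : ψ.IsPrimitive) (w : ι → R) :
    ∑ ℓ : ι → R, ψ (ℓ ⬝ᵥ w) = if w = 0 then (Fintype.card R : R') ^ Fintype.card ι else 0 := by
  simp_rw [dotProduct, map_sum_eq_prod]
  rw [← Fintype.prod_sum (fun i t => ψ (t * w i))]
  simp_rw [sum_mulShift _ hψ]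
  split_ifs with hw
  · simp [hw]
  · obtain ⟨i, hi⟩ : ∃ i, w i ≠ 0 := Function.ne_iff.mp hw
    exact prod_eq_zero (mem_univ i) (by simp [hi])

section Counting
variable {R Ω ι : Type*} [CommRing R] [Fintype R] [DecidableEq R] [Fintype Ω]
  [Fintype ι] [DecidableEq ι]

lemma card_pow_mul_card_filter_eq_sum {R' : Type*} [CommRing R'] [IsDomain R']
    {ψ : AddChar R R'} (hψ : ψ.IsPrimitive) (f : Ω → ι → R) (v : ι → R) :
    (Fintype.card R : R') ^ Fintype.card ι * #{ω | f ω = v}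
      = ∑ ℓ : ι → R, ψ (-(ℓ ⬝ᵥ v)) * ∑ ω, ψ (ℓ ⬝ᵥ f ω) := by
  have h : ∀ ℓ ω, ψ (-(ℓ ⬝ᵥ v)) * ψ (ℓ ⬝ᵥ f ω) = ψ (ℓ ⬝ᵥ (f ω - v)) := fun ℓ ω => by
    rw [← map_add_eq_mul, dotProduct_sub, neg_add_eq_sub]
  simp_rw [mul_sum, h]
  rw [sum_comm]
  simp_rw [sum_dotProduct_eq_ite hψ, sub_eq_zero, sum_ite, sum_const_zero, add_zero, sum_const,
    nsmul_eq_mul, mul_comm]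

lemma abs_card_filter_div_card_sub_le [Nonempty Ω] {ψ : AddChar R ℂ} (hψ : ψ.IsPrimitive)
    (f : Ω → ι → R) (v : ι → R) :
    |(#{ω | f ω = v} : ℝ) / Fintype.card Ω - ((Fintype.card R : ℝ) ^ Fintype.card ι)⁻¹|
      ≤ ((Fintype.card R : ℝ) ^ Fintype.card ι)⁻¹ *
        ∑ ℓ ∈ univ.filter (fun ℓ : ι → R => ℓ ≠ 0), ‖∑ ω, ψ (ℓ ⬝ᵥ f ω)‖ / Fintype.card Ω := by
  set N : ℝ := (Fintype.card R : ℝ) ^ Fintype.card ι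
  set K : ℝ := (Fintype.card Ω : ℝ)
  have hN : 0 < N := by positivity
  have hK : 0 < K := by positivity
  have herr : ((N * #{ω | f ω = v} - K : ℝ) : ℂ)
      = ∑ ℓ ∈ univ.filter (fun ℓ : ι → R => ℓ ≠ 0), ψ (-(ℓ ⬝ᵥ v)) * ∑ ω, ψ (ℓ ⬝ᵥ f ω) := by
    push_cast [N, K]
    rw [card_pow_mul_card_filter_eq_sum hψ, filter_ne', ← add_sum_erase _ _ (mem_univ 0)]
    simp
  have hnum : |N * #{ω | f ω = v} - K|
      ≤ ∑ ℓ ∈ univ.filter (fun ℓ : ι → R => ℓ ≠ 0), ‖∑ ω, ψ (ℓ ⬝ᵥ f ω)‖ := by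
    rw [← Real.norm_eq_abs, ← Complex.norm_real, herr]
    refine (norm_sum_le _ _).trans_eq (sum_congr rfl fun ℓ _ => ?_)
    rw [norm_mul, AddChar.norm_apply, one_mul]
  rw [← sum_div, ← mul_div_assoc, le_div_iff₀ hK]
  calc _ = |N * #{ω | f ω = v} - K| / N := by
        rw [show (#{ω | f ω = v} : ℝ) / K - N⁻¹ = (N * #{ω | f ω = v} - K) / (N * K) by
          field_simp, abs_div, abs_of_pos (mul_pos hN hK)]
        field_simp
    _ ≤ _ := by rw [div_eq_inv_mul]; gcongr

end Counting

end AddChar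

section PairCoeff
variable {ι R : Type*} [Fintype ι] [LinearOrder ι] [CommRing R]

/-- The coefficient of the coin `σ r` in `ℓ ⬝ᵥ M_σ a`: the entry `(i, j)` of `M_σ` is the coin
at the sorted pair `(min i j, max i j)`. It vanishes unless `r.1 ≤ r.2`. -/
def pairCoeff (ℓ a : ι → R) (r : ι × ι) : R :=
  ∑ p ∈ univ.filter (fun p : ι × ι => (min p.1 p.2, max p.1 p.2) = r), ℓ p.1 * a p.2

lemma pairCoeff_of_lt (ℓ a : ι → R) {i j : ι} (h : i < j) :
    pairCoeff ℓ a (i, j) = ℓ i * a j + ℓ j * a i := by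
  have hfib : univ.filter (fun p : ι × ι => (min p.1 p.2, max p.1 p.2) = (i, j))
      = {(i, j), (j, i)} := by
    ext ⟨x, y⟩
    simp only [mem_filter, mem_univ, true_and, mem_insert, mem_singleton, Prod.mk.injEq]
    constructor
    · rintro ⟨hmin, hmax⟩
      rcases le_total x y with hxy | hxy <;> simp_all
    · rintro (⟨rfl, rfl⟩ | ⟨rfl, rfl⟩) <;> simp [h.le]
  rw [pairCoeff, hfib, sum_pair (by simp [h.ne])]

end PairCoeff

lemma dotProduct_signMatrix_mulVec {R : Type*} [CommRing R] {n : ℕ} (σ : Fin n → Fin n → Bool)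
    (ℓ a : Fin n → R) :
    ℓ ⬝ᵥ ((signMatrix n σ).map (Int.cast : ℤ → R) *ᵥ a)
      = ∑ r : Fin n × Fin n, (if σ r.1 r.2 then 1 else -1) * pairCoeff ℓ a r := by
  have hexpand : ℓ ⬝ᵥ ((signMatrix n σ).map (Int.cast : ℤ → R) *ᵥ a)
      = ∑ p : Fin n × Fin n,
          (if σ (min p.1 p.2) (max p.1 p.2) then 1 else -1) * (ℓ p.1 * a p.2) := by
    simp only [dotProduct, mulVec, map_apply, signMatrix, Fintype.sum_prod_type, mul_sum]
    refine sum_congr rfl fun i _ => sum_congr rfl fun j _ => ?_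
    split_ifs <;> simp
  rw [hexpand, ← sum_fiberwise univ (fun p : Fin n × Fin n => (min p.1 p.2, max p.1 p.2))]
  refine sum_congr rfl fun r _ => ?_
  rw [pairCoeff, mul_sum]
  refine sum_congr rfl fun p hp => ?_
  rw [← (mem_filter.mp hp).2]

lemma ZMod.stdAddChar_add_stdAddChar_neg {q : ℕ} [NeZero q] (x : ZMod q) :
    stdAddChar x + stdAddChar (-x) = ((2 * Real.cos (2 * Real.pi * x.val / q) : ℝ) : ℂ) := by
  rw [AddChar.map_neg_eq_conj, Complex.add_conj, stdAddChar_apply, toCircle_apply,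
    ← Complex.exp_ofReal_mul_I_re]
  push_cast
  ring_nf

lemma norm_sum_stdAddChar_dotProduct_signMatrix_mulVec_le {n q : ℕ} [NeZero q]
    (ℓ a : Fin n → ZMod q) :
    ‖∑ σ, ZMod.stdAddChar (ℓ ⬝ᵥ ((signMatrix n σ).map (Int.cast : ℤ → ZMod q) *ᵥ a))‖
      ≤ Fintype.card (Fin n → Fin n → Bool) *
        ∏ p ∈ univ.filter (fun p : Fin n × Fin n => p.1 < p.2),
          |Real.cos (2 * Real.pi * ((ℓ p.1 * a p.2 + ℓ p.2 * a p.1 : ZMod q).val : ℝ) / q)| := by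
  set θ : ZMod q → ℝ := fun x => 2 * Real.pi * x.val / q
  have hsum : ∑ σ, ZMod.stdAddChar (ℓ ⬝ᵥ ((signMatrix n σ).map (Int.cast : ℤ → ZMod q) *ᵥ a))
      = ∏ r : Fin n × Fin n, ((2 * Real.cos (θ (pairCoeff ℓ a r)) : ℝ) : ℂ) := by
    simp_rw [dotProduct_signMatrix_mulVec, ite_mul, one_mul, neg_one_mul]
    rw [← (Equiv.curry (Fin n) (Fin n) Bool).sum_comp]
    simp only [Equiv.curry_apply, Function.curry_apply]
    rw [AddChar.sum_pi_bool_map_sum_ite]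
    simp_rw [ZMod.stdAddChar_add_stdAddChar_neg]
    rfl
  have hcard : (Fintype.card (Fin n → Fin n → Bool) : ℝ) = 2 ^ Fintype.card (Fin n × Fin n) := by
    simp [← pow_mul]
  rw [hsum, ← Complex.ofReal_prod, Complex.norm_real, Real.norm_eq_abs, abs_prod]
  simp_rw [abs_mul, abs_two]
  rw [prod_mul_distrib, prod_const, card_univ, ← hcard]
  gcongr
  calc ∏ r, |Real.cos (θ (pairCoeff ℓ a r))|
      ≤ ∏ r ∈ univ.filter (fun p : Fin n × Fin n => p.1 < p.2), |Real.cos (θ (pairCoeff ℓ a r))| :=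
        prod_le_prod_of_subset_of_le_one (subset_univ _) (fun _ _ => abs_nonneg _)
          fun _ _ _ => Real.abs_cos_le_one _
    _ = _ := prod_congr rfl fun r hr => by rw [pairCoeff_of_lt _ _ (mem_filter.mp hr).2]

theorem fourier_error_bound_general (n q : ℕ) [Fact q.Prime]
    (a v : Fin n → ZMod q) :
    |probSym n (fun M => (M.map (Int.cast : ℤ → ZMod q)).mulVec a = v)
        - (q : ℝ) ^ (-(n : ℤ))|
      ≤ (q : ℝ) ^ (-(n : ℤ)) *
        ∑ ℓ ∈ Finset.univ.filter (fun ℓ : Fin n → ZMod q => ℓ ≠ 0),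
          ∏ p ∈ Finset.univ.filter (fun p : Fin n × Fin n => p.1 < p.2),
            |Real.cos (2 * Real.pi
              * ((ℓ p.1 * a p.2 + ℓ p.2 * a p.1 : ZMod q).val : ℝ) / q)| := by
  have hprob : probSym n (fun M => (M.map (Int.cast : ℤ → ZMod q)).mulVec a = v)
      = (#{σ | (signMatrix n σ).map (Int.cast : ℤ → ZMod q) *ᵥ a = v} : ℝ)
        / Fintype.card (Fin n → Fin n → Bool) := by
    rw [probSym, Nat.card_eq_fintype_card, Fintype.card_subtype]
  have hscale : (q : ℝ) ^ (-(n : ℤ))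
      = ((Fintype.card (ZMod q) : ℝ) ^ Fintype.card (Fin n))⁻¹ := by
    simp [_root_.zpow_neg]
  rw [hprob, hscale]
  refine (AddChar.abs_card_filter_div_card_sub_le (ZMod.isPrimitive_stdAddChar q) _ v).trans ?_
  gcongr with ℓ
  rw [div_le_iff₀ (by positivity), mul_comm]
  exact norm_sum_stdAddChar_dotProduct_signMatrix_mulVec_le ℓ a

/-- `|Pr[M_n · a = v] - q^(-n)|` is at most
`q^(-n) Σ_{ℓ ≠ 0} ∏_{i<j} |cos(2π(ℓᵢaⱼ+ℓⱼaᵢ)/q)|`. -/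
theorem fourier_error_bound (n q : ℕ) [Fact q.Prime] (hn : 1 ≤ n)
    (a v : Fin n → ZMod q) :
    |probSym n (fun M => (M.map (Int.cast : ℤ → ZMod q)).mulVec a = v)
        - (q : ℝ) ^ (-(n : ℤ))|
      ≤ (q : ℝ) ^ (-(n : ℤ)) *
        ∑ ℓ ∈ Finset.univ.filter (fun ℓ : Fin n → ZMod q => ℓ ≠ 0),
          ∏ p ∈ Finset.univ.filter (fun p : Fin n × Fin n => p.1 < p.2),
            |Real.cos (2 * Real.pi
              * ((ℓ p.1 * a p.2 + ℓ p.2 * a p.1 : ZMod q).val : ℝ) / q)| :=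
  fourier_error_bound_general n q a v
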